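/- arXiv:1803.10332 — 4 statements merged into one kernel-verified Lean document; each statement's English description precedes it below -/
import Mathlib

section
/- There exists an optimal solution of the balanced 2-maxian problem on T located on leaf vertices: there is a feasible triple (e*, x1*, x2*) such that x1* and x2* are leaves of T (vertices of degree one) and F(e*, x1*, x2*) ≥ F(e, x1, x2) for every feasible triple (e, x1, x2). -/
/-- Weighted distance between two vertices of a tree:
the total length of the unique path between them. -/
noncomputable def treeDist {V : Type*} (T : SimpleGraph V) (hT : T.IsTree) (ℓ : Sym2 V → ℝ)
    (u v : V) : ℝ :=
  (((hT.existsUnique_path u v).exists.choose.edges.map ℓ).sum)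

/-- The vertex set of the component containing `x` of the graph obtained from `T`
by deleting the edges in `E`. -/
noncomputable def comp {V : Type*} [Fintype V] (T : SimpleGraph V) (E : Set (Sym2 V)) (x : V) :
    Finset V :=
  @Finset.filter _ (fun v => (T.deleteEdges E).Reachable x v) (Classical.decPred _) Finset.univ

/-- The balanced 2-maxian objective of the feasible triple given by the deleted edge
`(vr, vs)` and the facilities `x1, x2`, where `T1` (containing `vr`) is served by `x1` and
`T2` (containing `vs`) is served by `x2`:
`F = λ(∑_{v∈T1} w_v d(v,x1) + ∑_{v∈T2} w_v d(v,x2)) − (1−λ)|∑_{v∈T1} z_v − ∑_{v∈T2} z_v|`. -/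
noncomputable def maxianObj {V : Type*} [Fintype V] (T : SimpleGraph V) (hT : T.IsTree)
    (ℓ : Sym2 V → ℝ) (w z : V → ℝ) (lam : ℝ) (vr vs x1 x2 : V) : ℝ :=
  lam * ((∑ v ∈ comp T {s(vr, vs)} vr, w v * treeDist T hT ℓ v x1) +
      ∑ v ∈ comp T {s(vr, vs)} vs, w v * treeDist T hT ℓ v x2) -
    (1 - lam) * |(∑ v ∈ comp T {s(vr, vs)} vr, z v) - ∑ v ∈ comp T {s(vr, vs)} vs, z v|

open SimpleGraph

section Aux
variable {V : Type*} {T : SimpleGraph V}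

lemma treeDist_eq_of_isPath (hT : T.IsTree) (ℓ : Sym2 V → ℝ) {u v : V}
    (p : T.Walk u v) (hp : p.IsPath) :
    treeDist T hT ℓ u v = (p.edges.map ℓ).sum := by
  have h := hT.existsUnique_path u v
  have h2 := h.unique h.exists.choose_spec hp
  rw [treeDist, h2]

lemma treeDist_self (hT : T.IsTree) (ℓ : Sym2 V → ℝ) (v : V) :
    treeDist T hT ℓ v v = 0 := by
  rw [treeDist_eq_of_isPath hT ℓ Walk.nil Walk.IsPath.nil]; simp

lemma mem_comp [Fintype V] {E : Set (Sym2 V)} {a x : V} :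
    x ∈ comp T E a ↔ (T.deleteEdges E).Reachable a x := by
  simp only [comp, Finset.mem_filter, Finset.mem_univ, true_and]

lemma not_reach_of_adj (hT : T.IsTree) {vr vs : V} (h : T.Adj vr vs) :
    ¬ (T.deleteEdges {s(vr, vs)}).Reachable vr vs := by
  have hb := (isAcyclic_iff_forall_adj_isBridge.mp hT.2) h
  rw [isBridge_iff] at hb
  exact hb

lemma reach_of_mem_support {G : SimpleGraph V} {a b c : V} (p : G.Walk a b)
    (hc : c ∈ p.support) : G.Reachable a c := by
  classical
  exact (p.takeUntil c hc).reachable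

lemma comp_step {vr vs : V} (hadj : T.Adj vr vs) : ∀ {a b : V} (_ : T.Walk a b),
    ((T.deleteEdges {s(vr,vs)}).Reachable vr a ∨ (T.deleteEdges {s(vr,vs)}).Reachable vs a) →
    ((T.deleteEdges {s(vr,vs)}).Reachable vr b ∨ (T.deleteEdges {s(vr,vs)}).Reachable vs b) := by
  intro a b p
  induction p with
  | nil => exact id
  | @cons a c b h q ih =>
    intro hyp
    apply ih
    by_cases he : s(a, c) = s(vr, vs)
    · rcases Sym2.eq_iff.mp he with ⟨rfl, rfl⟩ | ⟨rfl, rfl⟩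
      · right; exact Reachable.refl _
      · left; exact Reachable.refl _
    · have hadj' : (T.deleteEdges {s(vr,vs)}).Adj a c := by
        rw [SimpleGraph.deleteEdges_adj]
        exact ⟨h, by simpa using he⟩
      rcases hyp with h1 | h1
      · left; exact h1.trans hadj'.reachable
      · right; exact h1.trans hadj'.reachable

lemma comp_cover (hT : T.IsTree) {vr vs : V} (hadj : T.Adj vr vs) (v : V) :
    (T.deleteEdges {s(vr,vs)}).Reachable vr v ∨ (T.deleteEdges {s(vr,vs)}).Reachable vs v := by
  obtain ⟨p⟩ := hT.1.preconnected vr v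
  exact comp_step hadj p (Or.inl (Reachable.refl _))

lemma treeDist_split (hT : T.IsTree) (ℓ : Sym2 V → ℝ) {vr vs : V} (hadj : T.Adj vr vs) {v x : V}
    (hv : (T.deleteEdges {s(vr,vs)}).Reachable vr v)
    (hx : (T.deleteEdges {s(vr,vs)}).Reachable vs x) :
    treeDist T hT ℓ v x = treeDist T hT ℓ v vs + treeDist T hT ℓ vs x := by
  classical
  set G' := T.deleteEdges {s(vr,vs)} with hG'
  have hb := not_reach_of_adj hT hadj
  obtain ⟨w1⟩ := hv.symm
  obtain ⟨w2⟩ := hx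
  set p : G'.Walk v vr := w1.toPath.1 with hpdef
  set q : G'.Walk vs x := w2.toPath.1 with hqdef
  have hp : p.IsPath := w1.toPath.2
  have hq : q.IsPath := w2.toPath.2
  have hple : ∀ e ∈ p.edges, e ∈ T.edgeSet := fun e he =>
    (edgeSet_mono (T.deleteEdges_le _)) (p.edges_subset_edgeSet he)
  have hqle : ∀ e ∈ q.edges, e ∈ T.edgeSet := fun e he =>
    (edgeSet_mono (T.deleteEdges_le _)) (q.edges_subset_edgeSet he)
  set pT : T.Walk v vr := p.transfer T hple with hpT
  set qT : T.Walk vs x := q.transfer T hqle with hqT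
  have hpT_path : pT.IsPath := hp.transfer _
  have hqT_path : qT.IsPath := hq.transfer _
  have hpsup : pT.support = p.support := p.support_transfer _
  have hqsup : qT.support = q.support := q.support_transfer _
  have hpedge : pT.edges = p.edges := p.edges_transfer _
  have hqedge : qT.edges = q.edges := q.edges_transfer _
  have hpreach : ∀ c ∈ p.support, G'.Reachable vr c := by
    intro c hc
    exact reach_of_mem_support p.reverse (by simpa [Walk.support_reverse] using hc)
  have hqreach : ∀ c ∈ q.support, G'.Reachable vs c := fun c hc =>
    reach_of_mem_support q hc
  have hvs_not_p : vs ∉ pT.support := by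
    rw [hpsup]
    intro hmem
    exact hb (hpreach vs hmem)
  set m : T.Walk v vs := pT.concat hadj with hm
  have hm_path : m.IsPath := by
    rw [Walk.isPath_def, hm, Walk.support_concat]
    refine List.Nodup.append hpT_path.support_nodup (List.nodup_singleton _) ?_
    intro a ha hb'
    simp only [List.mem_singleton] at hb'
    subst hb'
    exact hvs_not_p ha
  have hmq_path : (m.append qT).IsPath := by
    rw [Walk.isPath_def, Walk.support_append]
    refine List.Nodup.append hm_path.support_nodup hqT_path.support_nodup.tail ?_
    intro c hc1 hc2
    have hc2' : c ∈ qT.support := List.mem_of_mem_tail hc2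
    have hcq : c ∈ q.support := by rwa [hqsup] at hc2'
    have hcvs : G'.Reachable vs c := hqreach c hcq
    rw [hm, Walk.support_concat, List.mem_append] at hc1
    rcases hc1 with hc1 | hc1
    · rw [hpsup] at hc1
      exact hb ((hpreach c hc1).trans hcvs.symm)
    · simp only [List.mem_singleton] at hc1
      subst hc1
      have hnodup := hqT_path.support_nodup
      rw [qT.support_eq_cons] at hnodup
      exact (List.nodup_cons.mp hnodup).1 hc2
  rw [treeDist_eq_of_isPath hT ℓ _ hmq_path, treeDist_eq_of_isPath hT ℓ _ hm_path,
    treeDist_eq_of_isPath hT ℓ _ hqT_path, Walk.edges_append, List.map_append, List.sum_append]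

/-- In the component of `vs` there is a leaf of `T` maximizing the distance to `vs`. -/
lemma exists_leaf_max (hT : T.IsTree) [Fintype V] (ℓ : Sym2 V → ℝ) (hℓ : ∀ e, 0 ≤ ℓ e)
    {vr vs : V} (hadj : T.Adj vr vs) :
    ∃ y, y ∈ comp T {s(vr,vs)} vs ∧ (∃! u, T.Adj y u) ∧
      ∀ x ∈ comp T {s(vr,vs)} vs, treeDist T hT ℓ vs x ≤ treeDist T hT ℓ vs y := by
  classical
  set G' := T.deleteEdges {s(vr,vs)} with hG'
  have hb := not_reach_of_adj hT hadj
  set f : V → ℝ := treeDist T hT ℓ vs with hf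
  set hop : V → ℕ := fun x => (hT.existsUnique_path vs x).exists.choose.length with hhop
  have hop_eq : ∀ {x : V} (p : T.Walk vs x), p.IsPath → p.length = hop x := by
    intro x p hp
    have h := hT.existsUnique_path vs x
    have := h.unique hp h.exists.choose_spec
    rw [this]
  set S : Finset V := comp T {s(vr,vs)} vs with hS
  have hvsS : vs ∈ S := mem_comp.mpr (Reachable.refl _)
  obtain ⟨y0, hy0S, hy0max⟩ := Finset.exists_max_image S f ⟨vs, hvsS⟩
  set S' : Finset V := @Finset.filter _ (fun x => f y0 ≤ f x) (Classical.decPred _) S with hS'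
  have hy0S' : y0 ∈ S' := Finset.mem_filter.mpr ⟨hy0S, le_refl _⟩
  obtain ⟨y, hyS', hymax⟩ := Finset.exists_max_image S' hop ⟨y0, hy0S'⟩
  have hyS : y ∈ S := (Finset.mem_filter.mp hyS').1
  have hfy0y : f y0 ≤ f y := (Finset.mem_filter.mp hyS').2
  have hfy : f y = f y0 := le_antisymm (hy0max y hyS) hfy0y
  have hyreach : G'.Reachable vs y := mem_comp.mp hyS
  set py : T.Walk vs y := (hT.existsUnique_path vs y).exists.choose with hpy
  have hpy_path : py.IsPath := (hT.existsUnique_path vs y).exists.choose_spec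
  have hy_ne_vr : y ≠ vr := by
    rintro rfl
    exact hb hyreach.symm
  -- main extension claim
  have claim : ∀ u, T.Adj y u → s(y, u) ≠ s(vr, vs) → u ∉ py.support → False := by
    intro u hu hne hnotin
    set P : T.Walk vs u := py.concat hu with hP
    have hP_path : P.IsPath := by
      rw [Walk.isPath_def, hP, Walk.support_concat]
      refine List.Nodup.append hpy_path.support_nodup (List.nodup_singleton _) ?_
      intro a ha hb'
      simp only [List.mem_singleton] at hb'
      subst hb'
      exact hnotin ha
    have hadj' : G'.Adj y u := by
      rw [hG', SimpleGraph.deleteEdges_adj]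
      exact ⟨hu, by simpa using hne⟩
    have huS : u ∈ S := mem_comp.mpr (hyreach.trans hadj'.reachable)
    have hfu : f u = f y + ℓ s(y, u) := by
      rw [hf, treeDist_eq_of_isPath hT ℓ P hP_path, treeDist_eq_of_isPath hT ℓ py hpy_path,
        hP, Walk.edges_concat, List.concat_eq_append, List.map_append, List.sum_append]
      simp
    have hfu_ge : f y0 ≤ f u := by
      rw [hfu, ← hfy]
      have := hℓ s(y, u)
      linarith
    have huS' : u ∈ S' := Finset.mem_filter.mpr ⟨huS, hfu_ge⟩
    have hhopu : hop u = hop y + 1 := by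
      rw [← hop_eq P hP_path, ← hop_eq py hpy_path, hP, Walk.length_concat]
    have := hymax u huS'
    omega
  by_cases hyvs : y = vs
  · -- y = vs : the unique neighbour is vr
    subst hyvs
    refine ⟨y, hyS, ⟨vr, hadj.symm, ?_⟩, fun x hx => hy0max x hx |>.trans hfy0y⟩
    intro u hu
    by_contra hune
    have hne : s(y, u) ≠ s(vr, y) := by
      intro h
      rcases Sym2.eq_iff.mp h with ⟨h1, h2⟩ | ⟨h1, h2⟩
      · exact hadj.ne h1.symm
      · exact hune h2
    have hpynil : py.support = [y] := by
      have : py = Walk.nil := by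
        have h := hT.existsUnique_path y y
        have := h.unique hpy_path Walk.IsPath.nil
        exact this
      rw [this, Walk.support_nil]
    exact claim u hu hne (by rw [hpynil]; intro hmem; exact hu.ne (List.mem_singleton.mp hmem).symm)
  · -- y ≠ vs : the unique neighbour is the penultimate vertex of py
    have hpyr_path : py.reverse.IsPath := hpy_path.reverse
    obtain ⟨wv, hyw, q, hq⟩ := Walk.exists_eq_cons_of_ne (Ne.symm (Ne.intro fun h => hyvs h.symm)) py.reverse
    have hq_path : q.IsPath ∧ y ∉ q.support := by
      have := hpyr_path
      rw [hq, Walk.cons_isPath_iff] at this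
      exact this
    refine ⟨y, hyS, ⟨wv, hyw, ?_⟩, fun x hx => (hy0max x hx).trans hfy0y⟩
    intro u hu
    by_contra hune
    have hne : s(y, u) ≠ s(vr, vs) := by
      intro h
      rcases Sym2.eq_iff.mp h with ⟨h1, h2⟩ | ⟨h1, h2⟩
      · exact hy_ne_vr h1
      · exact hyvs h1
    have hnotin : u ∉ py.support := by
      intro hmem
      have hmemr : u ∈ py.reverse.support := by
        rw [Walk.support_reverse]; exact List.mem_reverse.mpr hmem
      rw [hq, Walk.support_cons] at hmemr
      have huq : u ∈ q.support := by
        rcases List.mem_cons.mp hmemr with h1 | h1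
        · exact absurd h1.symm hu.ne
        · exact h1
      -- two distinct paths from y to u
      set A : T.Walk y u := Walk.cons hyw (q.takeUntil u huq) with hA
      have hA_path : A.IsPath := by
        rw [hA, Walk.cons_isPath_iff]
        exact ⟨hq_path.1.takeUntil huq,
          fun hmem' => hq_path.2 (q.support_takeUntil_subset huq hmem')⟩
      set B : T.Walk y u := Walk.cons hu Walk.nil with hB
      have hB_path : B.IsPath := by
        rw [hB, Walk.cons_isPath_iff]
        exact ⟨Walk.IsPath.nil, by simp [hu.ne]⟩
      have hAB : A = B := by
        have h := hT.existsUnique_path y u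
        rw [h.unique hA_path h.exists.choose_spec, h.unique hB_path h.exists.choose_spec]
      have hlen : A.length = B.length := by rw [hAB]
      rw [hA, hB, Walk.length_cons, Walk.length_cons, Walk.length_nil] at hlen
      have : (q.takeUntil u huq).length = 0 := by omega
      have := Walk.eq_of_length_eq_zero this
      exact hune this.symm
    exact claim u hu hne hnotin

/-- Monotonicity of the objective in the distances of the facilities from the cut vertices. -/
lemma obj_mono (hT : T.IsTree) [Fintype V] (ℓ : Sym2 V → ℝ)
    (w z : V → ℝ) (hw : ∀ v, 0 ≤ w v) (lam : ℝ) (hlam0 : 0 ≤ lam)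
    {a b x1 x2 y1 y2 : V} (hadj : T.Adj a b)
    (hx1 : x1 ∈ comp T {s(a,b)} b) (hx2 : x2 ∈ comp T {s(a,b)} a)
    (hy1 : y1 ∈ comp T {s(a,b)} b) (hy2 : y2 ∈ comp T {s(a,b)} a)
    (h1 : treeDist T hT ℓ b x1 ≤ treeDist T hT ℓ b y1)
    (h2 : treeDist T hT ℓ a x2 ≤ treeDist T hT ℓ a y2) :
    maxianObj T hT ℓ w z lam a b x1 x2 ≤ maxianObj T hT ℓ w z lam a b y1 y2 := by
  have hswap : ({s(b,a)} : Set (Sym2 V)) = {s(a,b)} := by rw [Sym2.eq_swap]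
  unfold maxianObj
  apply sub_le_sub_right
  apply mul_le_mul_of_nonneg_left _ hlam0
  apply add_le_add
  · apply Finset.sum_le_sum
    intro v hv
    have hvreach := mem_comp.mp hv
    rw [treeDist_split hT ℓ hadj hvreach (mem_comp.mp hx1),
      treeDist_split hT ℓ hadj hvreach (mem_comp.mp hy1)]
    exact mul_le_mul_of_nonneg_left (add_le_add le_rfl h1) (hw v)
  · apply Finset.sum_le_sum
    intro v hv
    have hvreach : (T.deleteEdges {s(b,a)}).Reachable b v := by
      rw [hswap]; exact mem_comp.mp hv
    have hx2' : (T.deleteEdges {s(b,a)}).Reachable a x2 := by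
      rw [hswap]; exact mem_comp.mp hx2
    have hy2' : (T.deleteEdges {s(b,a)}).Reachable a y2 := by
      rw [hswap]; exact mem_comp.mp hy2
    rw [treeDist_split hT ℓ hadj.symm hvreach hx2',
      treeDist_split hT ℓ hadj.symm hvreach hy2']
    exact mul_le_mul_of_nonneg_left (add_le_add le_rfl h2) (hw v)

end Aux

/-- There exists an optimal solution of the balanced 2-maxian problem on a
tree `T` located on leaf vertices: a feasible triple (deleted edge `(vr,vs)`, facilities
`x1 ∈ T2`, `x2 ∈ T1`) whose facilities are leaves (vertices of degree one) and whose objective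
value is at least that of every feasible triple. -/
theorem balanced_two_maxian_opt_on_leaves {V : Type*} [Fintype V]
    (T : SimpleGraph V) (hT : T.IsTree) (hcard : 2 ≤ Fintype.card V)
    (ℓ : Sym2 V → ℝ) (hℓ : ∀ e, 0 ≤ ℓ e)
    (w z : V → ℝ) (hw : ∀ v, 0 ≤ w v) (hz : ∀ v, 0 ≤ z v)
    (lam : ℝ) (hlam : lam ∈ Set.Icc (0 : ℝ) 1) :
    ∃ vr vs x1 x2 : V, T.Adj vr vs ∧
      (∃! y, T.Adj x1 y) ∧ (∃! y, T.Adj x2 y) ∧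
      x1 ∈ comp T {s(vr, vs)} vs ∧ x2 ∈ comp T {s(vr, vs)} vr ∧
      ∀ vr' vs' x1' x2' : V, T.Adj vr' vs' →
        x1' ∈ comp T {s(vr', vs')} vs' → x2' ∈ comp T {s(vr', vs')} vr' →
        maxianObj T hT ℓ w z lam vr' vs' x1' x2' ≤ maxianObj T hT ℓ w z lam vr vs x1 x2 := by
  classical
  -- there is an edge
  obtain ⟨a0, b0, hab0⟩ := Fintype.exists_pair_of_one_lt_card (show 1 < Fintype.card V by omega)
  obtain ⟨p0⟩ := hT.1.preconnected a0 b0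
  obtain ⟨c0, hac0, -, -⟩ := SimpleGraph.Walk.exists_eq_cons_of_ne hab0 p0
  -- the finite set of feasible quadruples
  set Q : Finset (V × V × V × V) := @Finset.filter _
    (fun t => T.Adj t.1 t.2.1 ∧ t.2.2.1 ∈ comp T {s(t.1, t.2.1)} t.2.1 ∧
      t.2.2.2 ∈ comp T {s(t.1, t.2.1)} t.1) (Classical.decPred _) Finset.univ with hQ
  have hQmem : ∀ t : V × V × V × V, t ∈ Q ↔ T.Adj t.1 t.2.1 ∧
      t.2.2.1 ∈ comp T {s(t.1, t.2.1)} t.2.1 ∧ t.2.2.2 ∈ comp T {s(t.1, t.2.1)} t.1 := by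
    intro t
    simp only [hQ, Finset.mem_filter, Finset.mem_univ, true_and]
  have hQne : Q.Nonempty := by
    refine ⟨(a0, c0, c0, a0), (hQmem _).mpr ⟨hac0, mem_comp.mpr (SimpleGraph.Reachable.refl _),
      mem_comp.mpr (SimpleGraph.Reachable.refl _)⟩⟩
  obtain ⟨t, htQ, htmax⟩ := Finset.exists_max_image Q
    (fun t => maxianObj T hT ℓ w z lam t.1 t.2.1 t.2.2.1 t.2.2.2) hQne
  obtain ⟨A, B, C, D⟩ := t
  obtain ⟨hadjAB, hC, hD⟩ := (hQmem _).mp htQ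
  -- leaves on each side
  obtain ⟨y1, hy1mem, hy1leaf, hy1max⟩ := exists_leaf_max hT ℓ hℓ hadjAB
  obtain ⟨y2, hy2mem', hy2leaf, hy2max'⟩ := exists_leaf_max hT ℓ hℓ hadjAB.symm
  have hswap : ({s(B,A)} : Set (Sym2 V)) = {s(A,B)} := by rw [Sym2.eq_swap]
  have hcompswap : comp T {s(B,A)} A = comp T {s(A,B)} A := by rw [Sym2.eq_swap]
  have hy2mem : y2 ∈ comp T {s(A,B)} A := by rwa [hcompswap] at hy2mem'
  have hy2max : ∀ x ∈ comp T {s(A,B)} A, treeDist T hT ℓ A x ≤ treeDist T hT ℓ A y2 := by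
    intro x hx
    exact hy2max' x (by rwa [hcompswap])
  refine ⟨A, B, y1, y2, hadjAB, hy1leaf, hy2leaf, hy1mem, hy2mem, ?_⟩
  intro vr' vs' x1' x2' h1 h2 h3
  have step1 : maxianObj T hT ℓ w z lam vr' vs' x1' x2' ≤ maxianObj T hT ℓ w z lam A B C D :=
    htmax (vr', vs', x1', x2') ((hQmem _).mpr ⟨h1, h2, h3⟩)
  have step2 : maxianObj T hT ℓ w z lam A B C D ≤ maxianObj T hT ℓ w z lam A B y1 y2 :=
    obj_mono hT ℓ w z hw lam hlam.1 hadjAB hC hD hy1mem hy2mem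
      (hy1max C hC) (hy2max D hD)
  exact step1.trans step2
end

section
/- Let x1 and x2 be distinct vertices of T, let e be an edge on the unique path P between x1 and x2, and let T2 and T1 be the components of T − e containing x1 and x2, respectively. Let a and b be the endpoints of a diameter of T, and suppose P is not a longest path of T, i.e. d(x1,x2) < d(a,b). Then there exists c ∈ {a,b} such that either c ∈ T1 and d(c,x1) ≥ d(x1,x2), or c ∈ T2 and d(c,x2) ≥ d(x1,x2). -/
namespace TreeProofAux

open SimpleGraph Walk

variable {V : Type*} {T : SimpleGraph V}

/-- The canonical path between two vertices of a tree. -/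
noncomputable def geo (hT : T.IsTree) (u v : V) : T.Walk u v :=
  (hT.existsUnique_path u v).exists.choose

lemma geo_isPath (hT : T.IsTree) (u v : V) : (geo hT u v).IsPath :=
  (hT.existsUnique_path u v).exists.choose_spec

lemma treeDist_eq' (hT : T.IsTree) (ℓ : Sym2 V → ℝ) (u v : V) :
    treeDist T hT ℓ u v = (((geo hT u v).edges.map ℓ).sum) := rfl

lemma treeDist_eq (hT : T.IsTree) (ℓ : Sym2 V → ℝ) {u v : V} (p : T.Walk u v) (hp : p.IsPath) :
    treeDist T hT ℓ u v = ((p.edges.map ℓ).sum) := by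
  rw [treeDist_eq', (hT.existsUnique_path u v).unique (geo_isPath hT u v) hp]

lemma treeDist_symm (hT : T.IsTree) (ℓ : Sym2 V → ℝ) (u v : V) :
    treeDist T hT ℓ u v = treeDist T hT ℓ v u := by
  rw [treeDist_eq hT ℓ (geo hT v u).reverse ((geo_isPath hT v u).reverse),
    treeDist_eq hT ℓ (geo hT v u) (geo_isPath hT v u), edges_reverse, List.map_reverse,
    List.sum_reverse]

lemma treeDist_le_walk (hT : T.IsTree) (ℓ : Sym2 V → ℝ) (hℓ : ∀ e, 0 ≤ ℓ e) {u v : V}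
    (p : T.Walk u v) : treeDist T hT ℓ u v ≤ ((p.edges.map ℓ).sum) := by
  classical
  rw [treeDist_eq hT ℓ p.bypass p.bypass_isPath]
  obtain ⟨l, hperm, hsub⟩ :=
    (p.bypass_isPath.isTrail.edges_nodup).subperm p.edges_bypass_subset
  calc (p.bypass.edges.map ℓ).sum = (l.map ℓ).sum := ((hperm.map ℓ).sum_eq).symm
    _ ≤ (p.edges.map ℓ).sum := by
        refine (hsub.map ℓ).sum_le_sum ?_
        intro x hx
        obtain ⟨e, -, rfl⟩ := List.mem_map.mp hx
        exact hℓ e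

lemma treeDist_triangle (hT : T.IsTree) (ℓ : Sym2 V → ℝ) (hℓ : ∀ e, 0 ≤ ℓ e) (u w v : V) :
    treeDist T hT ℓ u v ≤ treeDist T hT ℓ u w + treeDist T hT ℓ w v := by
  have h := treeDist_le_walk hT ℓ hℓ ((geo hT u w).append (geo hT w v))
  rwa [edges_append, List.map_append, List.sum_append, ← treeDist_eq' hT ℓ u w,
    ← treeDist_eq' hT ℓ w v] at h

lemma isPath_append {u w v : V} {p : T.Walk u w} {q : T.Walk w v} (hp : p.IsPath)
    (hq : q.IsPath) (hint : ∀ z ∈ p.support, z ∈ q.support → z = w) :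
    (p.append q).IsPath := by
  have hqs : q.support.Nodup := hq.support_nodup
  have hcons := q.support_eq_cons
  rw [hcons, List.nodup_cons] at hqs
  rw [isPath_def, support_append]
  refine List.Nodup.append hp.support_nodup hqs.2 ?_
  intro z hz1 hz2
  have hzq : z ∈ q.support := by rw [hcons]; exact List.mem_cons_of_mem _ hz2
  have := hint z hz1 hzq
  subst this
  exact hqs.1 hz2

lemma exists_firstHit {x1 x2 : V} (P : T.Walk x1 x2) {u y : V} (R : T.Walk u y) :
    y ∈ P.support →
    ∃ w, ∃ R1 : T.Walk u w, w ∈ P.support ∧ ∀ z ∈ R1.support, z ∈ P.support → z = w := by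
  induction R with
  | nil =>
    intro hy
    exact ⟨_, Walk.nil, hy, by simp⟩
  | @cons u' b' y' h p ih =>
    intro hy
    by_cases hu : u' ∈ P.support
    · exact ⟨u', Walk.nil, hu, by simp⟩
    · obtain ⟨w, R1, hw, hfirst⟩ := ih hy
      refine ⟨w, Walk.cons h R1, hw, ?_⟩
      intro z hz hzP
      rw [support_cons] at hz
      rcases List.mem_cons.mp hz with rfl | hz'
      · exact absurd hzP hu
      · exact hfirst z hz' hzP

/-- Projection of a vertex onto a path in a tree. -/
lemma proj (hT : T.IsTree) (ℓ : Sym2 V → ℝ) {x1 x2 : V} (P : T.Walk x1 x2) (hP : P.IsPath)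
    {vr vs : V} (hrs : vr ≠ vs) (hvr : vr ∈ P.support) (hvs : vs ∈ P.support) (u : V) :
    ∃ w, ∃ _hw : w ∈ P.support,
      treeDist T hT ℓ u x1 = treeDist T hT ℓ u w + treeDist T hT ℓ x1 w ∧
      treeDist T hT ℓ u x2 = treeDist T hT ℓ u w + treeDist T hT ℓ w x2 ∧
      (T.deleteEdges {s(vr, vs)}).Reachable u w := by
  classical
  obtain ⟨R0⟩ := hT.isConnected.preconnected u x1
  obtain ⟨w, R1', hw, hfirst'⟩ := exists_firstHit P R0 P.start_mem_support
  set R1 := R1'.bypass with hR1def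
  have hR1 : R1.IsPath := R1'.bypass_isPath
  have hfirst : ∀ z ∈ R1.support, z ∈ P.support → z = w := fun z hz hzP =>
    hfirst' z (R1'.support_bypass_subset hz) hzP
  have hnoedge : s(vr, vs) ∉ R1.edges := by
    intro hin
    apply hrs
    have h1 := R1.fst_mem_support_of_mem_edges hin
    have h2 := R1.snd_mem_support_of_mem_edges hin
    rw [hfirst vr h1 hvr, hfirst vs h2 hvs]
  have hreach : (T.deleteEdges {s(vr, vs)}).Reachable u w :=
    ⟨R1.toDeleteEdges {s(vr, vs)} (fun f hf hfs =>
      hnoedge (Set.mem_singleton_iff.mp hfs ▸ hf))⟩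
  have htake : (P.takeUntil w hw).IsPath := hP.takeUntil hw
  have hdrop : (P.dropUntil w hw).IsPath := hP.dropUntil hw
  have h1 : treeDist T hT ℓ u x1 = treeDist T hT ℓ u w + treeDist T hT ℓ x1 w := by
    have hpath : (R1.append (P.takeUntil w hw).reverse).IsPath := by
      refine isPath_append hR1 htake.reverse ?_
      intro z hz1 hz2
      rw [support_reverse, List.mem_reverse] at hz2
      exact hfirst z hz1 (P.support_takeUntil_subset hw hz2)
    rw [treeDist_eq hT ℓ _ hpath, edges_append, edges_reverse, List.map_append,
      List.map_reverse, List.sum_append, List.sum_reverse,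
      ← treeDist_eq hT ℓ R1 hR1, ← treeDist_eq hT ℓ (P.takeUntil w hw) htake]
  have h2 : treeDist T hT ℓ u x2 = treeDist T hT ℓ u w + treeDist T hT ℓ w x2 := by
    have hpath : (R1.append (P.dropUntil w hw)).IsPath := by
      refine isPath_append hR1 hdrop ?_
      intro z hz1 hz2
      exact hfirst z hz1 (P.support_dropUntil_subset hw hz2)
    rw [treeDist_eq hT ℓ _ hpath, edges_append, List.map_append, List.sum_append,
      ← treeDist_eq hT ℓ R1 hR1, ← treeDist_eq hT ℓ (P.dropUntil w hw) hdrop]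
  exact ⟨w, hw, h1, h2, hreach⟩

lemma aux {V : Type*} [Fintype V] {T : SimpleGraph V} (hT : T.IsTree) (ℓ : Sym2 V → ℝ)
    (hℓ : ∀ e, 0 ≤ ℓ e) {x1 x2 vr vs : V}
    (a b wa wb : V)
    (Qa : T.Walk x1 wa) (S : T.Walk wa wb) (Rb : T.Walk wb x2)
    (hPP : (Qa.append (S.append Rb)).IsPath)
    (he : s(vr, vs) ∈ (Qa.append (S.append Rb)).edges)
    (ha2 : treeDist T hT ℓ a x2 = treeDist T hT ℓ a wa + treeDist T hT ℓ wa x2)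
    (hb1 : treeDist T hT ℓ b x1 = treeDist T hT ℓ b wb + treeDist T hT ℓ x1 wb)
    (hra : (T.deleteEdges {s(vr, vs)}).Reachable a wa)
    (hrb : (T.deleteEdges {s(vr, vs)}).Reachable b wb)
    (hdiam : ∀ u v : V, treeDist T hT ℓ u v ≤ treeDist T hT ℓ a b) :
    ∃ c ∈ ({a, b} : Set V),
      (c ∈ comp T {s(vr, vs)} x2 ∧ treeDist T hT ℓ x1 x2 ≤ treeDist T hT ℓ c x1) ∨
      (c ∈ comp T {s(vr, vs)} x1 ∧ treeDist T hT ℓ x1 x2 ≤ treeDist T hT ℓ c x2) := by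
  have hSR : (S.append Rb).IsPath := hPP.of_append_right
  have hQa : Qa.IsPath := hPP.of_append_left
  have hS : S.IsPath := hSR.of_append_left
  have hRb : Rb.IsPath := hSR.of_append_right
  have hQS : (Qa.append S).IsPath :=
    IsPath.of_append_left (q := Rb) (by rw [← append_assoc]; exact hPP)
  set q : ℝ := (Qa.edges.map ℓ).sum with hq
  set s : ℝ := (S.edges.map ℓ).sum with hs
  set r : ℝ := (Rb.edges.map ℓ).sum with hr
  have e1 : treeDist T hT ℓ x1 wa = q := treeDist_eq hT ℓ Qa hQa
  have e2 : treeDist T hT ℓ wa wb = s := treeDist_eq hT ℓ S hS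
  have e3 : treeDist T hT ℓ wb x2 = r := treeDist_eq hT ℓ Rb hRb
  have e4 : treeDist T hT ℓ wa x2 = s + r := by
    rw [treeDist_eq hT ℓ _ hSR, edges_append, List.map_append, List.sum_append]
  have e5 : treeDist T hT ℓ x1 wb = q + s := by
    rw [treeDist_eq hT ℓ _ hQS, edges_append, List.map_append, List.sum_append]
  have e6 : treeDist T hT ℓ x1 x2 = q + (s + r) := by
    rw [treeDist_eq hT ℓ _ hPP, edges_append, edges_append, List.map_append, List.map_append,
      List.sum_append, List.sum_append]
  have sym1 : treeDist T hT ℓ wb b = treeDist T hT ℓ b wb := treeDist_symm hT ℓ wb b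
  have sym2 : treeDist T hT ℓ x2 a = treeDist T hT ℓ a x2 := treeDist_symm hT ℓ x2 a
  have sym3 : treeDist T hT ℓ x1 b = treeDist T hT ℓ b x1 := treeDist_symm hT ℓ x1 b
  have tri : treeDist T hT ℓ a b ≤
      treeDist T hT ℓ a wa + (treeDist T hT ℓ wa wb + treeDist T hT ℓ wb b) :=
    (treeDist_triangle hT ℓ hℓ a wa b).trans
      (by linarith [treeDist_triangle hT ℓ hℓ wa wb b])
  have hd1 := hdiam x1 b
  have hd2 := hdiam x2 a
  have goalA : treeDist T hT ℓ x1 x2 ≤ treeDist T hT ℓ a x2 := by linarith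
  have goalB : treeDist T hT ℓ x1 x2 ≤ treeDist T hT ℓ b x1 := by linarith
  have hnodup : ((Qa.append (S.append Rb)).edges).Nodup := hPP.isTrail.edges_nodup
  rw [edges_append, edges_append] at hnodup
  by_cases hc : s(vr, vs) ∈ Qa.edges
  · have hdisj := (List.nodup_append'.mp hnodup).2.2
    have hnot : s(vr, vs) ∉ Rb.edges := fun hin =>
      hdisj hc (List.mem_append_right _ hin)
    have hreach2 : (T.deleteEdges {s(vr, vs)}).Reachable wb x2 :=
      ⟨Rb.toDeleteEdges {s(vr, vs)} (fun f hf hfs =>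
        hnot (Set.mem_singleton_iff.mp hfs ▸ hf))⟩
    refine ⟨b, by simp, Or.inl ⟨?_, goalB⟩⟩
    simp only [comp, Finset.mem_filter, Finset.mem_univ, true_and]
    exact hreach2.symm.trans hrb.symm
  · have hreach1 : (T.deleteEdges {s(vr, vs)}).Reachable x1 wa :=
      ⟨Qa.toDeleteEdges {s(vr, vs)} (fun f hf hfs =>
        hc (Set.mem_singleton_iff.mp hfs ▸ hf))⟩
    refine ⟨a, by simp, Or.inr ⟨?_, goalA⟩⟩
    simp only [comp, Finset.mem_filter, Finset.mem_univ, true_and]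
    exact hreach1.trans hra.symm

end TreeProofAux

open TreeProofAux SimpleGraph Walk in
theorem diameter_endpoint_far_from_facility {V : Type*} [Fintype V]
    (T : SimpleGraph V) (hT : T.IsTree) (ℓ : Sym2 V → ℝ) (hℓ : ∀ e, 0 ≤ ℓ e)
    (x1 x2 : V) (hne : x1 ≠ x2)
    (vr vs : V) (hadj : T.Adj vr vs)
    (honpath : ∀ p : T.Walk x1 x2, p.IsPath → s(vr, vs) ∈ p.edges)
    (a b : V) (hdiam : ∀ u v : V, treeDist T hT ℓ u v ≤ treeDist T hT ℓ a b)
    (hnotlong : treeDist T hT ℓ x1 x2 < treeDist T hT ℓ a b) :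
    ∃ c ∈ ({a, b} : Set V),
      (c ∈ comp T {s(vr, vs)} x2 ∧ treeDist T hT ℓ x1 x2 ≤ treeDist T hT ℓ c x1) ∨
      (c ∈ comp T {s(vr, vs)} x1 ∧ treeDist T hT ℓ x1 x2 ≤ treeDist T hT ℓ c x2) := by
  classical
  set P : T.Walk x1 x2 := geo hT x1 x2 with hPdef
  have hP : P.IsPath := geo_isPath hT x1 x2
  have he : s(vr, vs) ∈ P.edges := honpath P hP
  have hrs : vr ≠ vs := hadj.ne
  have hvr : vr ∈ P.support := P.fst_mem_support_of_mem_edges he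
  have hvs : vs ∈ P.support := P.snd_mem_support_of_mem_edges he
  obtain ⟨wa, hwa, ha1, ha2, hra⟩ := proj hT ℓ P hP hrs hvr hvs a
  obtain ⟨wb, hwb, hb1, hb2, hrb⟩ := proj hT ℓ P hP hrs hvr hvs b
  obtain ⟨Qa, Ra, hPeq⟩ := mem_support_iff_exists_append.mp hwa
  have hwb' : wb ∈ Qa.support ∨ wb ∈ Ra.support := by
    rw [hPeq, mem_support_append_iff] at hwb
    exact hwb
  rcases hwb' with hwbQ | hwbR
  · -- wb comes before wa : apply aux with roles of a and b swapped
    obtain ⟨U, W, hQeq⟩ := mem_support_iff_exists_append.mp hwbQ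
    have hPeq2 : P = U.append (W.append Ra) := by
      rw [hPeq, hQeq, ← append_assoc]
    have hPP : (U.append (W.append Ra)).IsPath := by rw [← hPeq2]; exact hP
    have he2 : s(vr, vs) ∈ (U.append (W.append Ra)).edges := by rw [← hPeq2]; exact he
    have hdiam' : ∀ u v : V, treeDist T hT ℓ u v ≤ treeDist T hT ℓ b a := fun u v =>
      (hdiam u v).trans_eq (treeDist_symm hT ℓ a b)
    obtain ⟨c, hc, hcond⟩ := aux hT ℓ hℓ b a wb wa U W Ra hPP he2 hb2 ha1 hrb hra hdiam'
    exact ⟨c, by rw [Set.pair_comm]; exact hc, hcond⟩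
  · -- wa comes before wb
    obtain ⟨S, Rb, hReq⟩ := mem_support_iff_exists_append.mp hwbR
    have hPeq2 : P = Qa.append (S.append Rb) := by rw [hPeq, hReq]
    have hPP : (Qa.append (S.append Rb)).IsPath := by rw [← hPeq2]; exact hP
    have he2 : s(vr, vs) ∈ (Qa.append (S.append Rb)).edges := by rw [← hPeq2]; exact he
    exact aux hT ℓ hℓ a b wa wb Qa S Rb hPP he2 ha2 hb1 hra hrb hdiam
end

section
/- Let P = v_1, …, v_n (n ≥ 3) be a path with nonnegative edge lengths, nonnegative vertex weights w_i and nonnegative values z_i, and let Z = Σ_{i=1}^n z_i. Fix 2 ≤ j ≤ n−1 and set u = v_j, e_1 = (v_{j−1}, v_j), e_2 = (v_j, v_{j+1}). If Σ_{i=1}^{j} z_i < Z/2, then f^{e_1}(v_1,v_n) − f^{e_2}(v_1,v_n) = λ w_j (d(v_j,v_1) − d(v_j,v_n)) − 2(1−λ) z_j. -/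
/-- Let `P = v_1, …, v_n` (`n ≥ 3`) be a path with nonnegative edge lengths
(`L i` is the length of the edge `(v_i, v_{i+1})`), nonnegative weights `w` and values `z`,
and `d i k = ∑_{m=min i k}^{max i k - 1} L m` the distance between `v_i` and `v_k`.
For a deleted edge `(v_m, v_{m+1})`, the balanced 2-maxian objective at facilities `v_1, v_n`
is `f m = λ(∑_{i=m+1}^{n} w_i d(v_i,v_1) + ∑_{i=1}^{m} w_i d(v_i,v_n))
          − (1−λ)|∑_{i=m+1}^{n} z_i − ∑_{i=1}^{m} z_i|`.
Fix `2 ≤ j ≤ n−1`, `e_1 = (v_{j−1},v_j)`, `e_2 = (v_j,v_{j+1})`. If `∑_{i=1}^{j} z_i < Z/2`,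
then `f^{e_1} − f^{e_2} = λ w_j (d(v_j,v_1) − d(v_j,v_n)) − 2(1−λ) z_j`. -/
theorem objective_difference_adjacent_edges_below_half
    (n : ℕ) (hn : 3 ≤ n) (L w z : ℕ → ℝ)
    (hL : ∀ i, 0 ≤ L i) (hw : ∀ i, 0 ≤ w i) (hz : ∀ i, 0 ≤ z i)
    (lam : ℝ) (hlam : lam ∈ Set.Icc (0 : ℝ) 1)
    (d : ℕ → ℕ → ℝ) (hd : ∀ i k, d i k = ∑ m ∈ Finset.Ico (min i k) (max i k), L m)
    (f : ℕ → ℝ)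
    (hf : ∀ m, f m =
      lam * ((∑ i ∈ Finset.Icc (m + 1) n, w i * d i 1) + ∑ i ∈ Finset.Icc 1 m, w i * d i n) -
        (1 - lam) * |(∑ i ∈ Finset.Icc (m + 1) n, z i) - ∑ i ∈ Finset.Icc 1 m, z i|)
    (j : ℕ) (hj2 : 2 ≤ j) (hjn : j ≤ n - 1)
    (hhalf : ∑ i ∈ Finset.Icc 1 j, z i < (∑ i ∈ Finset.Icc 1 n, z i) / 2) :
    f (j - 1) - f j = lam * w j * (d j 1 - d j n) - 2 * (1 - lam) * z j := by
  obtain ⟨lam0, lam1⟩ := hlam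
  obtain ⟨k, rfl⟩ : ∃ k, j = k + 1 := ⟨j - 1, by omega⟩
  have hk1 : 1 ≤ k := by omega
  have hkn : k + 2 ≤ n := by omega
  have hsplit : ∀ (g : ℕ → ℝ),
      (∑ i ∈ Finset.Icc (k + 1) n, g i) = g (k + 1) + ∑ i ∈ Finset.Icc (k + 2) n, g i ∧
      (∑ i ∈ Finset.Icc 1 (k + 1), g i) = (∑ i ∈ Finset.Icc 1 k, g i) + g (k + 1) := by
    intro g
    constructor
    · rw [Finset.Icc_add_one_left_eq_Ioc k n, (show Finset.Icc (k + 2) n = Finset.Ioc (k + 1) n from Finset.Icc_add_one_left_eq_Ioc (k + 1) n),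
        ← Finset.sum_Ioc_consecutive g (Nat.le_succ k) (by omega : k + 1 ≤ n),
        Nat.Ioc_succ_singleton, Finset.sum_singleton]
    · rw [(show Finset.Icc 1 (k + 1) = Finset.Ioc 0 (k + 1) from Finset.Icc_add_one_left_eq_Ioc 0 (k + 1)), (show Finset.Icc 1 k = Finset.Ioc 0 k from Finset.Icc_add_one_left_eq_Ioc 0 k),
        ← Finset.sum_Ioc_consecutive g (Nat.zero_le k) (Nat.le_succ k),
        Nat.Ioc_succ_singleton, Finset.sum_singleton]
  have htot : (∑ i ∈ Finset.Icc 1 n, z i)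
      = (∑ i ∈ Finset.Icc 1 k, z i) + z (k + 1) + ∑ i ∈ Finset.Icc (k + 2) n, z i := by
    rw [(show Finset.Icc 1 n = Finset.Ioc 0 n from Finset.Icc_add_one_left_eq_Ioc 0 n), (show Finset.Icc 1 k = Finset.Ioc 0 k from Finset.Icc_add_one_left_eq_Ioc 0 k), (show Finset.Icc (k + 2) n = Finset.Ioc (k + 1) n from Finset.Icc_add_one_left_eq_Ioc (k + 1) n),
      ← Finset.sum_Ioc_consecutive z (Nat.zero_le (k + 1)) (by omega : k + 1 ≤ n),
      ← Finset.sum_Ioc_consecutive z (Nat.zero_le k) (Nat.le_succ k),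
      Nat.Ioc_succ_singleton, Finset.sum_singleton]
  set S := ∑ i ∈ Finset.Icc 1 k, z i with hS
  set R := ∑ i ∈ Finset.Icc (k + 2) n, z i with hR
  have hhalf' : S + z (k + 1) < (S + z (k + 1) + R) / 2 := by
    have := (hsplit z).2
    rw [this, htot] at hhalf
    linarith
  have hzk := hz (k + 1)
  have habs1 : |(∑ i ∈ Finset.Icc (k + 1) n, z i) - ∑ i ∈ Finset.Icc 1 k, z i|
      = z (k + 1) + R - S := by
    rw [(hsplit z).1, ← hR, ← hS, abs_of_nonneg (by linarith)]
  have habs2 : |(∑ i ∈ Finset.Icc (k + 2) n, z i) - ∑ i ∈ Finset.Icc 1 (k + 1), z i|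
      = R - S - z (k + 1) := by
    rw [(hsplit z).2, ← hR, ← hS, abs_of_nonneg (by linarith)]
    ring
  have e1 := (hsplit (fun i => w i * d i 1)).1
  have e2 := (hsplit (fun i => w i * d i n)).2
  simp only [Nat.add_sub_cancel]
  rw [hf k, hf (k + 1), habs1, habs2, e1, e2]
  ring
end

section
/- Let P = v_1, …, v_n (n ≥ 3) be a path with nonnegative edge lengths, nonnegative vertex weights w_i and nonnegative values z_i, and let Z = Σ_{i=1}^n z_i. Fix 2 ≤ j ≤ n−1 and set u = v_j, e_1 = (v_{j−1}, v_j), e_2 = (v_j, v_{j+1}). If Σ_{i=1}^{j−1} z_i ≥ Z/2, then f^{e_1}(v_1,v_n) − f^{e_2}(v_1,v_n) = λ w_j (d(v_j,v_1) − d(v_j,v_n)) + 2(1−λ) z_j. -/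
/-!
Moving the deleted edge from `(v_{j-1}, v_j)` to `(v_j, v_{j+1})` moves `v_j` from the
component served by `v_1` to the one served by `v_n`. The service cost therefore changes by
`w_j (d(v_j, v_1) - d(v_j, v_n))`, and the signed imbalance of the `z`-values drops by `2 z_j`.
Since `v_1, …, v_{j-1}` already carry at least half of the total value, the imbalance is
nonpositive for both edges, so its absolute value grows by exactly `2 z_j`.
-/

open Finset

section CutShift

variable {M : Type*} {m n : ℕ}

theorem sum_Icc_succ_eq_add_sum_Icc [AddCommMonoid M] (g : ℕ → M) (h : m + 1 ≤ n) :
    ∑ i ∈ Icc (m + 1) n, g i = g (m + 1) + ∑ i ∈ Icc (m + 1 + 1) n, g i := by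
  rw [Icc_add_one_left_eq_Ioc (m + 1), add_sum_Ioc_eq_sum_Icc h]

theorem sum_Icc_one_eq_add_sum_Icc_succ [AddCommMonoid M] (g : ℕ → M) (h : m ≤ n) :
    ∑ i ∈ Icc 1 n, g i = ∑ i ∈ Icc 1 m, g i + ∑ i ∈ Icc (m + 1) n, g i := by
  have Icc_one_eq_Ioc_zero (k : ℕ) : Icc 1 k = Ioc 0 k := Icc_add_one_left_eq_Ioc 0 k
  rw [Icc_one_eq_Ioc_zero, Icc_one_eq_Ioc_zero, Icc_add_one_left_eq_Ioc,
    sum_Ioc_consecutive g m.zero_le h]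

theorem cut_sum_sub_cut_sum_succ [AddCommGroup M] (g h : ℕ → M) (hmn : m + 1 ≤ n) :
    (∑ i ∈ Icc (m + 1) n, g i + ∑ i ∈ Icc 1 m, h i) -
        (∑ i ∈ Icc (m + 1 + 1) n, g i + ∑ i ∈ Icc 1 (m + 1), h i) = g (m + 1) - h (m + 1) := by
  rw [sum_Icc_succ_eq_add_sum_Icc g hmn, sum_Icc_succ_top (by omega)]
  abel

theorem abs_cut_imbalance_sub_abs_cut_imbalance_succ {K : Type*} [Field K] [LinearOrder K]
    [IsStrictOrderedRing K] (z : ℕ → K) (hz : 0 ≤ z (m + 1)) (hmn : m + 1 ≤ n)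
    (hhalf : (∑ i ∈ Icc 1 n, z i) / 2 ≤ ∑ i ∈ Icc 1 m, z i) :
    |∑ i ∈ Icc (m + 1) n, z i - ∑ i ∈ Icc 1 m, z i| -
        |∑ i ∈ Icc (m + 1 + 1) n, z i - ∑ i ∈ Icc 1 (m + 1), z i| = -2 * z (m + 1) := by
  rw [sum_Icc_one_eq_add_sum_Icc_succ z (by omega : m ≤ n),
    sum_Icc_succ_eq_add_sum_Icc z hmn] at hhalf
  rw [sum_Icc_succ_eq_add_sum_Icc z hmn, sum_Icc_succ_top (by omega),
    abs_of_nonpos (by linarith), abs_of_nonpos (by linarith)]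
  ring

end CutShift

-- `f m` is the objective with the edge `(v_m, v_{m+1})` deleted: `e_1`, `e_2` are `m = j - 1`, `m = j`.
theorem objective_difference_adjacent_edges_above_half_general
    (n : ℕ) (w z : ℕ → ℝ)
    (hz : ∀ i, 0 ≤ z i)
    (lam : ℝ)
    (d : ℕ → ℕ → ℝ)
    (f : ℕ → ℝ)
    (hf : ∀ m, f m =
      lam * ((∑ i ∈ Finset.Icc (m + 1) n, w i * d i 1) + ∑ i ∈ Finset.Icc 1 m, w i * d i n) -
        (1 - lam) * |(∑ i ∈ Finset.Icc (m + 1) n, z i) - ∑ i ∈ Finset.Icc 1 m, z i|)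
    (j : ℕ) (hj2 : 2 ≤ j) (hjn : j ≤ n - 1)
    (hhalf : (∑ i ∈ Finset.Icc 1 n, z i) / 2 ≤ ∑ i ∈ Finset.Icc 1 (j - 1), z i) :
    f (j - 1) - f j = lam * w j * (d j 1 - d j n) + 2 * (1 - lam) * z j := by
  obtain ⟨m, rfl⟩ : ∃ m, j = m + 1 := ⟨j - 1, by omega⟩
  have hmn : m + 1 ≤ n := by omega
  rw [Nat.add_sub_cancel] at hhalf ⊢
  rw [hf, hf]
  linear_combination
    lam * cut_sum_sub_cut_sum_succ (fun i ↦ w i * d i 1) (fun i ↦ w i * d i n) hmn -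
      (1 - lam) * abs_cut_imbalance_sub_abs_cut_imbalance_succ z (hz (m + 1)) hmn hhalf

/-- Let `P = v_1, …, v_n` (`n ≥ 3`) be a path with nonnegative edge lengths
(`L i` is the length of the edge `(v_i, v_{i+1})`), nonnegative weights `w` and values `z`,
and `d i k = ∑_{m=min i k}^{max i k - 1} L m` the distance between `v_i` and `v_k`.
For a deleted edge `(v_m, v_{m+1})`, the balanced 2-maxian objective at facilities `v_1, v_n`
is `f m = λ(∑_{i=m+1}^{n} w_i d(v_i,v_1) + ∑_{i=1}^{m} w_i d(v_i,v_n))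
          − (1−λ)|∑_{i=m+1}^{n} z_i − ∑_{i=1}^{m} z_i|`.
Fix `2 ≤ j ≤ n−1`, `e_1 = (v_{j−1},v_j)`, `e_2 = (v_j,v_{j+1})`. If `∑_{i=1}^{j−1} z_i ≥ Z/2`,
then `f^{e_1} − f^{e_2} = λ w_j (d(v_j,v_1) − d(v_j,v_n)) + 2(1−λ) z_j`. -/
theorem objective_difference_adjacent_edges_above_half
    (n : ℕ) (hn : 3 ≤ n) (L w z : ℕ → ℝ)
    (hL : ∀ i, 0 ≤ L i) (hw : ∀ i, 0 ≤ w i) (hz : ∀ i, 0 ≤ z i)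
    (lam : ℝ) (hlam : lam ∈ Set.Icc (0 : ℝ) 1)
    (d : ℕ → ℕ → ℝ) (hd : ∀ i k, d i k = ∑ m ∈ Finset.Ico (min i k) (max i k), L m)
    (f : ℕ → ℝ)
    (hf : ∀ m, f m =
      lam * ((∑ i ∈ Finset.Icc (m + 1) n, w i * d i 1) + ∑ i ∈ Finset.Icc 1 m, w i * d i n) -
        (1 - lam) * |(∑ i ∈ Finset.Icc (m + 1) n, z i) - ∑ i ∈ Finset.Icc 1 m, z i|)
    (j : ℕ) (hj2 : 2 ≤ j) (hjn : j ≤ n - 1)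
    (hhalf : (∑ i ∈ Finset.Icc 1 n, z i) / 2 ≤ ∑ i ∈ Finset.Icc 1 (j - 1), z i) :
    f (j - 1) - f j = lam * w j * (d j 1 - d j n) + 2 * (1 - lam) * z j :=
  objective_difference_adjacent_edges_above_half_general n w z hz lam d f hf j hj2 hjn hhalf
end
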